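/- arXiv:2308.15887 — 3 statements merged into one kernel-verified Lean document; each statement's English description precedes it below -/
import Mathlib

section
/- (Main Proposition) There is no C-complete CLIP-like model: if C = (f, g) is a CLIP-like model, I is describable by A, and (I, A) is separable, then C cannot simultaneously respect basic descriptions, negation, disjunction, and conjunction. -/
open scoped RealInnerProductSpace

/-- Cosine similarity between two vectors in a real inner product space. -/
noncomputable def cosSim {L : Type*} [NormedAddCommGroup L] [InnerProductSpace ℝ L]
    (x y : L) : ℝ := ⟪x, y⟫ / (‖x‖ * ‖y‖)

/-- Propositional formulas over a set `A` of atomic descriptions. -/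
inductive Formula (A : Type*) : Type _
  | atom : A → Formula A
  | neg  : Formula A → Formula A
  | or   : Formula A → Formula A → Formula A
  | and  : Formula A → Formula A → Formula A

variable {I A L : Type*} [NormedAddCommGroup L] [InnerProductSpace ℝ L]

/-- Satisfaction `i ⊨ d`, defined by recursion on the formula `d`. -/
def Sat (f : I → L) (g : Formula A → L) (i : I) : Formula A → Prop
  | .atom a => cosSim (f i) (g (.atom a)) > cosSim (f i) (g (.neg (.atom a)))
  | .neg d  => ¬ Sat f g i d
  | .or d e => Sat f g i d ∨ Sat f g i e
  | .and d e => Sat f g i d ∧ Sat f g i e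

/-- `I` is describable by `A`. -/
def Describable (f : I → L) (g : Formula A → L) : Prop :=
  (∀ i : I, ∃ a : A, Sat f g i (.atom a)) ∧ (∀ a : A, ∃ i : I, Sat f g i (.atom a))

/-- `(I, A)` is separable. -/
def Separable (f : I → L) (g : Formula A → L) : Prop :=
  (∀ i : I, ∃ a : A, Sat f g i (.neg (.atom a))) ∧
  (∀ a : A, ∃ i : I, Sat f g i (.neg (.atom a)))

/-- `C` respects basic descriptions. -/
def RespectsBasic (f : I → L) (g : Formula A → L) : Prop :=
  ∀ (i : I) (a : A), Sat f g i (.atom a) → cosSim (f i) (g (.atom a)) = 1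

/-- `C` respects negation. -/
def RespectsNeg (f : I → L) (g : Formula A → L) : Prop :=
  ∀ (i : I) (a : A), Sat f g i (.neg (.atom a)) → cosSim (f i) (g (.atom a)) = -1

/-- `C` respects disjunction. -/
def RespectsDisj (f : I → L) (g : Formula A → L) : Prop :=
  ∀ (i : I) (d e : Formula A), Sat f g i (.or d e) → cosSim (f i) (g (.or d e)) = 1

/-- `C` respects conjunction. -/
def RespectsConj (f : I → L) (g : Formula A → L) : Prop :=
  ∀ (i : I) (d e : Formula A), Sat f g i (.and d e) → cosSim (f i) (g (.and d e)) = 1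

/-! The tautology `a ∨ ¬a` is satisfied both by an image satisfying `a` and by one satisfying `¬a`,
so respecting disjunction puts both image embeddings at angle `0` from `g (a ∨ ¬a)`, hence at
angle `0` from each other. Respecting basic descriptions and negation puts them at angles `0` and
`π` from `g a`, which contradicts the triangle inequality for angles. -/

open InnerProductGeometry

lemma cosSim_eq_one_iff {x y : L} : cosSim x y = 1 ↔ angle x y = 0 := by
  rw [cosSim, real_inner_div_norm_mul_norm_eq_one_iff, angle_eq_zero_iff]

lemma cosSim_eq_neg_one_iff {x y : L} : cosSim x y = -1 ↔ angle x y = Real.pi := by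
  rw [cosSim, real_inner_div_norm_mul_norm_eq_neg_one_iff, angle_eq_pi_iff]

lemma cosSim_ne_neg_one_of_eq_one {x y z w : L} (hxz : cosSim x z = 1) (hyz : cosSim y z = 1)
    (hxw : cosSim x w = 1) : cosSim y w ≠ -1 := by
  rw [cosSim_eq_one_iff] at hxz hyz hxw
  rw [Ne, cosSim_eq_neg_one_iff]
  have : angle y w ≤ 0 := calc
    angle y w ≤ angle y z + angle z w := angle_le_angle_add_angle y z w
    _ ≤ angle y z + (angle z x + angle x w) := by gcongr; exact angle_le_angle_add_angle z x w
    _ = 0 := by rw [hyz, angle_comm, hxz, hxw]; simp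
  linarith [Real.pi_pos]

theorem no_C_complete_CLIP_like_model_general
    [Nonempty A]
    (f : I → L) (g : Formula A → L)
    (hdesc : Describable f g) (hsep : Separable f g) :
    ¬ (RespectsBasic f g ∧ RespectsNeg f g ∧ RespectsDisj f g ∧ RespectsConj f g) := by
  rintro ⟨hbasic, hneg, hdisj, -⟩
  obtain ⟨a⟩ := ‹Nonempty A›
  obtain ⟨i, hi⟩ := hdesc.2 a
  obtain ⟨j, hj⟩ := hsep.2 a
  exact cosSim_ne_neg_one_of_eq_one (hdisj i _ (.neg (.atom a)) (Or.inl hi))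
    (hdisj j _ _ (Or.inr hj)) (hbasic i a hi) (hneg j a hj)

/-- **Main Proposition.** There is no C-complete CLIP-like model: if `C = (f, g)` is a
CLIP-like model, `I` is describable by `A`, and `(I, A)` is separable, then `C` cannot
simultaneously respect basic descriptions, negation, disjunction, and conjunction. -/
theorem no_C_complete_CLIP_like_model
    [Nontrivial L] [Nonempty A]
    (f : I → L) (g : Formula A → L)
    (hf : ∀ i : I, f i ≠ 0) (hg : ∀ d : Formula A, g d ≠ 0)
    (hdesc : Describable f g) (hsep : Separable f g) :
    ¬ (RespectsBasic f g ∧ RespectsNeg f g ∧ RespectsDisj f g ∧ RespectsConj f g) :=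
  no_C_complete_CLIP_like_model_general f g hdesc hsep
end

section
/- (Strengthened main proposition, as established by the paper's proof) If C = (f, g) is a CLIP-like model, I is describable by A, (I, A) is separable, and C respects basic descriptions, negation, and disjunction, then a contradiction follows; i.e., no CLIP-like model over a describable and separable (I, A) can respect basic descriptions, negation, and disjunction simultaneously (the conjunction condition is not needed). -/
open scoped RealInnerProductSpace

variable {I A L : Type*} [NormedAddCommGroup L] [InnerProductSpace ℝ L]

/-!
An image satisfying an atom `a` and an image satisfying `¬a` both satisfy `a ∨ ¬a`, so respecting
disjunction puts both at angle `0` from the vector of `a ∨ ¬a`. By the triangle inequality for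
angles they are then at angle `0` from each other, hence have the same cosine similarity with
the vector of `a`; but respecting basic descriptions and negation makes these `1` and `-1`.
-/

open InnerProductGeometry

theorem cosSim_eq_cos_angle (x y : L) : cosSim x y = Real.cos (angle x y) :=
  (cos_angle x y).symm

theorem angle_eq_zero_of_cosSim_eq_one {x y : L} (h : cosSim x y = 1) : angle x y = 0 :=
  cos_eq_one_iff_angle_eq_zero.mp (cosSim_eq_cos_angle x y ▸ h)

theorem angle_left_eq_of_angle_eq_zero {x y : L} (h : angle x y = 0) (w : L) :
    angle x w = angle y w :=
  le_antisymm (by simpa [h] using angle_le_angle_add_angle x y w)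
    (by simpa [angle_comm y x, h] using angle_le_angle_add_angle y x w)

theorem angle_eq_zero_of_angle_eq_zero_of_angle_eq_zero {x y v : L}
    (hx : angle x v = 0) (hy : angle y v = 0) : angle x y = 0 := by
  rw [angle_comm, angle_left_eq_of_angle_eq_zero hy, angle_comm, hx]

theorem cosSim_left_eq_of_cosSim_eq_one {x y v : L} (hx : cosSim x v = 1) (hy : cosSim y v = 1)
    (w : L) : cosSim x w = cosSim y w := by
  have hxy := angle_eq_zero_of_angle_eq_zero_of_angle_eq_zero
    (angle_eq_zero_of_cosSim_eq_one hx) (angle_eq_zero_of_cosSim_eq_one hy)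
  rw [cosSim_eq_cos_angle, cosSim_eq_cos_angle, angle_left_eq_of_angle_eq_zero hxy]

theorem no_CLIP_like_model_respecting_basic_neg_disj_general
    [Nonempty A]
    (f : I → L) (g : Formula A → L)
    (hdesc : Describable f g) (hsep : Separable f g)
    (hbasic : RespectsBasic f g) (hneg : RespectsNeg f g) (hdisj : RespectsDisj f g) :
    False := by
  obtain ⟨a⟩ := ‹Nonempty A›
  obtain ⟨i, hi⟩ := hdesc.2 a
  obtain ⟨j, hj⟩ := hsep.2 a
  have hij : cosSim (f i) (g (.atom a)) = cosSim (f j) (g (.atom a)) :=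
    cosSim_left_eq_of_cosSim_eq_one (hdisj i _ (.neg (.atom a)) (.inl hi))
      (hdisj j (.atom a) _ (.inr hj)) _
  rw [hbasic i a hi, hneg j a hj] at hij
  norm_num at hij

/-- **Strengthened main proposition.** No CLIP-like model over a describable and separable
`(I, A)` can respect basic descriptions, negation, and disjunction simultaneously
(the conjunction condition is not needed). -/
theorem no_CLIP_like_model_respecting_basic_neg_disj
    [Nontrivial L] [Nonempty A]
    (f : I → L) (g : Formula A → L)
    (hf : ∀ i : I, f i ≠ 0) (hg : ∀ d : Formula A, g d ≠ 0)
    (hdesc : Describable f g) (hsep : Separable f g)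
    (hbasic : RespectsBasic f g) (hneg : RespectsNeg f g) (hdisj : RespectsDisj f g) :
    False :=
  no_CLIP_like_model_respecting_basic_neg_disj_general f g hdesc hsep hbasic hneg hdisj
end

section
/- (Lemma 2) Suppose C = (f, g) is a CLIP-like model that respects basic descriptions, negation, and disjunction, and I is describable by A. Then there exists a nonzero vector v ∈ L such that: (i) every f(i) for i ∈ I, and every g(a) for an atom a satisfied by some image, is a positive scalar multiple of v; and (ii) for every i ∈ I and atom a ∈ A with i ⊨ ¬a, g(a) is a positive scalar multiple of −v. That is, embeddings of falsified atomic descriptions lie on the anti-ray of the ray from Lemma 1. -/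
/-! A disjunction `a ∨ b` with `i ⊨ a` and `j ⊨ b` is satisfied by both images, so by respect
for disjunction its embedding is a positive multiple of both `f i` and `f j`; hence all image
embeddings lie on one ray, spanned by any `f i₀`. Respect for basic descriptions puts `g a` on the
ray of an image satisfying `a`, and respect for negation puts it on the anti-ray of an image
falsifying `a`. -/

open scoped RealInnerProductSpace

variable {I A L : Type*} [NormedAddCommGroup L] [InnerProductSpace ℝ L]

lemma exists_pos_smul_of_pos_smul_eq {K V : Type*} [Field K] [LinearOrder K]
    [IsStrictOrderedRing K] [AddCommGroup V] [Module K V] {x y : V} {r s : K}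
    (hr : 0 < r) (hs : 0 < s) (h : r • x = s • y) : ∃ t : K, 0 < t ∧ y = t • x :=
  ⟨r / s, div_pos hr hs, by rw [div_eq_inv_mul, mul_smul, h, inv_smul_smul₀ hs.ne']⟩

section CLIPModel

variable {f : I → L} {g : Formula A → L}

lemma RespectsBasic.exists_pos_smul (hbasic : RespectsBasic f g) {i : I} {a : A}
    (h : Sat f g i (.atom a)) : ∃ r : ℝ, 0 < r ∧ g (.atom a) = r • f i :=
  ((real_inner_div_norm_mul_norm_eq_one_iff _ _).1 (hbasic i a h)).2

lemma RespectsNeg.exists_neg_smul (hneg : RespectsNeg f g) {i : I} {a : A}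
    (h : Sat f g i (.neg (.atom a))) : ∃ r : ℝ, r < 0 ∧ g (.atom a) = r • f i :=
  ((real_inner_div_norm_mul_norm_eq_neg_one_iff _ _).1 (hneg i a h)).2

lemma RespectsDisj.exists_pos_smul (hdisj : RespectsDisj f g) {i j : I} {d e : Formula A}
    (hi : Sat f g i d) (hj : Sat f g j e) : ∃ t : ℝ, 0 < t ∧ f j = t • f i := by
  obtain ⟨r, hr, hgi⟩ := ((real_inner_div_norm_mul_norm_eq_one_iff _ _).1
    (hdisj i d e (Or.inl hi))).2
  obtain ⟨s, hs, hgj⟩ := ((real_inner_div_norm_mul_norm_eq_one_iff _ _).1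
    (hdisj j d e (Or.inr hj))).2
  exact exists_pos_smul_of_pos_smul_eq hr hs (hgi.symm.trans hgj)

end CLIPModel

theorem lemma2_general
    [Nontrivial L]
    (f : I → L) (g : Formula A → L)
    (hf : ∀ i : I, f i ≠ 0)
    (hbasic : RespectsBasic f g) (hneg : RespectsNeg f g) (hdisj : RespectsDisj f g)
    (hdesc : Describable f g) :
    ∃ v : L, v ≠ 0 ∧
      (∀ i : I, ∃ t : ℝ, 0 < t ∧ f i = t • v) ∧
      (∀ a : A, (∃ j : I, Sat f g j (.atom a)) →
        ∃ s : ℝ, 0 < s ∧ g (.atom a) = s • v) ∧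
      (∀ (i : I) (a : A), Sat f g i (.neg (.atom a)) →
        ∃ s : ℝ, 0 < s ∧ g (.atom a) = s • (-v)) := by
  rcases isEmpty_or_nonempty I with hI | ⟨⟨i₀⟩⟩
  · obtain ⟨v, hv⟩ := exists_ne (0 : L)
    exact ⟨v, hv, isEmptyElim, fun _ ⟨j, _⟩ => isEmptyElim j, isEmptyElim⟩
  obtain ⟨a₀, ha₀⟩ := hdesc.1 i₀
  have on_ray (i : I) : ∃ t : ℝ, 0 < t ∧ f i = t • f i₀ :=
    let ⟨_, ha⟩ := hdesc.1 i
    hdisj.exists_pos_smul ha₀ ha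
  refine ⟨f i₀, hf i₀, on_ray, ?_, ?_⟩
  · rintro a ⟨j, hj⟩
    obtain ⟨r, hr, hga⟩ := hbasic.exists_pos_smul hj
    obtain ⟨t, ht, hfj⟩ := on_ray j
    exact ⟨r * t, mul_pos hr ht, by rw [hga, hfj, smul_smul]⟩
  · intro i a hia
    obtain ⟨r, hr, hga⟩ := hneg.exists_neg_smul hia
    obtain ⟨t, ht, hfi⟩ := on_ray i
    exact ⟨-r * t, mul_pos (neg_pos.2 hr) ht, by rw [hga, hfi]; module⟩

/-- **Lemma 2.** Embeddings of falsified atomic descriptions lie on the anti-ray of the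
ray from Lemma 1. -/
theorem lemma2
    [Nontrivial L]
    (f : I → L) (g : Formula A → L)
    (hf : ∀ i : I, f i ≠ 0) (hg : ∀ d : Formula A, g d ≠ 0)
    (hbasic : RespectsBasic f g) (hneg : RespectsNeg f g) (hdisj : RespectsDisj f g)
    (hdesc : Describable f g) :
    ∃ v : L, v ≠ 0 ∧
      (∀ i : I, ∃ t : ℝ, 0 < t ∧ f i = t • v) ∧
      (∀ a : A, (∃ j : I, Sat f g j (.atom a)) →
        ∃ s : ℝ, 0 < s ∧ g (.atom a) = s • v) ∧
      (∀ (i : I) (a : A), Sat f g i (.neg (.atom a)) →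
        ∃ s : ℝ, 0 < s ∧ g (.atom a) = s • (-v)) :=
  lemma2_general f g hf hbasic hneg hdisj hdesc
end
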